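/- Let A be a Banach algebra with character φ and suppose A has a topologically left invariant φ-mean m on WAP(A*) (the weakly almost periodic functionals). If LUC(A*) ⊆ WAP(A*) and A admits a topologically right invariant φ-mean on LUC(A*)*, then the topologically left invariant φ-mean on LUC(A*)* is unique. -/

import Mathlib

open scoped Topology
open Filter

noncomputable def fdot {A : Type*} [NonUnitalNormedRing A] [NormedSpace ℂ A]
    [IsScalarTower ℂ A A] [SMulCommClass ℂ A A] (f : A →L[ℂ] ℂ) (a : A) : A →L[ℂ] ℂ :=
  f.comp (ContinuousLinearMap.mul ℂ A a)

noncomputable def adot {A : Type*} [NonUnitalNormedRing A] [NormedSpace ℂ A]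
    [IsScalarTower ℂ A A] [SMulCommClass ℂ A A] (a : A) (f : A →L[ℂ] ℂ) : A →L[ℂ] ℂ :=
  f.comp ((ContinuousLinearMap.mul ℂ A).flip a)

/-- LUC(A*): the closed linear span of A*·A in A*. -/
noncomputable def LUCsub (A : Type*) [NonUnitalNormedRing A] [NormedSpace ℂ A]
    [IsScalarTower ℂ A A] [SMulCommClass ℂ A A] : Submodule ℂ (A →L[ℂ] ℂ) :=
  (Submodule.span ℂ {g : A →L[ℂ] ℂ | ∃ f a, g = fdot f a}).topologicalClosure

/-- `f` is weakly almost periodic: the orbit {a·f : ‖a‖ ≤ 1} is relatively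
weakly compact in A*. -/
def WAPp {A : Type*} [NonUnitalNormedRing A] [NormedSpace ℂ A]
    [IsScalarTower ℂ A A] [SMulCommClass ℂ A A] (f : A →L[ℂ] ℂ) : Prop :=
  IsCompact (closure {g : WeakSpace ℂ (A →L[ℂ] ℂ) | ∃ a : A, ‖a‖ ≤ 1 ∧ g = adot a f})

section Basic
variable {A : Type*} [NonUnitalNormedRing A] [NormedSpace ℂ A]
    [IsScalarTower ℂ A A] [SMulCommClass ℂ A A]

lemma fdot_apply (f : A →L[ℂ] ℂ) (a b : A) : fdot f a b = f (a * b) := rfl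

lemma adot_apply (a : A) (f : A →L[ℂ] ℂ) (b : A) : adot a f b = f (b * a) := rfl

lemma adot_smul (c : ℂ) (a : A) (f : A →L[ℂ] ℂ) : adot (c • a) f = c • adot a f := by
  ext b
  simp only [adot_apply, ContinuousLinearMap.smul_apply, smul_eq_mul]
  rw [mul_smul_comm, map_smul, smul_eq_mul]

/-- continuity of evaluation maps on the weak space -/
lemma weak_eval_cont {E : Type*} [NormedAddCommGroup E] [NormedSpace ℂ E] (y : E →L[ℂ] ℂ) :
    Continuous fun h : WeakSpace ℂ E => y h :=
  WeakBilin.eval_continuous ((topDualPairing ℂ E).flip) y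

end Basic

section Helly
variable {A : Type*} [NonUnitalNormedRing A] [NormedSpace ℂ A]

/-- Goldstine/Helly-type approximation: any functional on the dual can be approximated
by evaluation at an element of a slightly larger ball, on finitely many functionals. -/
lemma helly_approx (μ : (A →L[ℂ] ℂ) →L[ℂ] ℂ) (t : Finset (A →L[ℂ] ℂ)) {ε : ℝ} (hε : 0 < ε) :
    ∃ b : A, ‖b‖ ≤ ‖μ‖ + ε ∧ ∀ g ∈ t, ‖g b - μ g‖ < ε := by
  classical
  set R : ℝ := ‖μ‖ + ε with hRdef
  have hR0 : 0 < R := by positivity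
  set T : A →ₗ[ℝ] (↥t → ℂ) :=
    LinearMap.pi (fun g => ((g : A →L[ℂ] ℂ).restrictScalars ℝ).toLinearMap) with hT
  set y : ↥t → ℂ := fun g => μ g with hy
  set B : Set (↥t → ℂ) := T '' Metric.closedBall 0 R with hB
  have hyB : y ∈ closure B := by
    by_contra hyB
    have hBconv : Convex ℝ (closure B) :=
      ((convex_closedBall (0 : A) R).linear_image T).closure
    obtain ⟨Λ, u, hΛB, hΛy⟩ := geometric_hahn_banach_closed_point hBconv isClosed_closure hyB
    set c : ↥t → ℂ := fun g =>
      (Λ (Pi.single g 1) : ℂ) - (Λ (Pi.single g Complex.I) : ℂ) * Complex.I with hc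
    have hdecomp : ∀ z : ↥t → ℂ, Λ z = (∑ g, c g * z g).re := by
      intro z
      have hz : ∑ g, Pi.single g (z g) = z := Finset.univ_sum_single z
      conv_lhs => rw [← hz]
      rw [map_sum, Complex.re_sum]
      refine Finset.sum_congr rfl fun g _ => ?_
      have hsingle : (Pi.single g (z g) : ↥t → ℂ)
          = (z g).re • (Pi.single g (1 : ℂ) : ↥t → ℂ)
            + (z g).im • (Pi.single g Complex.I : ↥t → ℂ) := by
        funext g'
        rcases eq_or_ne g' g with rfl | hgg
        · simp only [Pi.add_apply, Pi.smul_apply, Pi.single_eq_same]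
          rw [Complex.real_smul, Complex.real_smul, mul_one]
          exact (Complex.re_add_im (z g')).symm
        · simp [Pi.single_eq_of_ne hgg]
      rw [hsingle, map_add, map_smul, map_smul]
      simp only [hc, smul_eq_mul, Complex.mul_re, Complex.sub_re, Complex.ofReal_re,
        Complex.mul_im, Complex.sub_im, Complex.ofReal_im, Complex.I_re, Complex.I_im]
      ring
    set h : A →L[ℂ] ℂ := ∑ g : ↥t, c g • (g : A →L[ℂ] ℂ) with hh
    have hTb : ∀ b : A, Λ (T b) = (h b).re := by
      intro b
      rw [hdecomp]
      congr 1
      simp [hh, hT, ContinuousLinearMap.sum_apply, LinearMap.pi_apply]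
    have hΛyval : Λ y = (μ h).re := by
      rw [hdecomp]
      congr 1
      rw [hh, map_sum]
      refine Finset.sum_congr rfl fun g _ => ?_
      simp [smul_eq_mul, hy]
    have hu0 : 0 < u := by
      have h0B : (0 : ↥t → ℂ) ∈ B := ⟨0, by simp [hR0.le], by simp⟩
      have := hΛB _ (subset_closure h0B)
      simpa using this
    -- bound on the ball of radius R
    have hball : ∀ b : A, ‖b‖ ≤ R → ‖h b‖ ≤ u := by
      intro b hb
      rcases eq_or_ne (h b) 0 with h0 | h0
      · simp [h0, hu0.le]
      · set w : ℂ := h b with hw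
        set cph : ℂ := (starRingEnd ℂ w) / (‖w‖ : ℂ) with hcph
        have hwn : (‖w‖ : ℝ) ≠ 0 := by simpa using h0
        have hwnC : ((‖w‖ : ℝ) : ℂ) ≠ 0 := by exact_mod_cast hwn
        have hcphn : ‖cph‖ = 1 := by
          rw [hcph, norm_div]
          simp only [RCLike.norm_conj, Complex.norm_real, Real.norm_eq_abs,
            abs_of_nonneg (norm_nonneg w)]
          exact div_self hwn
        have hmem : T (cph • b) ∈ B := by
          refine ⟨cph • b, ?_, rfl⟩
          simp only [Metric.mem_closedBall, dist_zero_right, norm_smul, hcphn, one_mul]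
          exact hb
        have hlt := hΛB _ (subset_closure hmem)
        rw [hTb] at hlt
        have heval : h (cph • b) = cph * w := by
          rw [map_smul, smul_eq_mul, hw]
        rw [heval] at hlt
        have hcw : cph * w = ((‖w‖ : ℝ) : ℂ) := by
          rw [hcph, div_mul_eq_mul_div, ← Complex.normSq_eq_conj_mul_self,
            Complex.normSq_eq_norm_sq]
          push_cast
          rw [sq, mul_div_assoc, div_self hwnC, mul_one]
        rw [hcw] at hlt
        simp only [Complex.ofReal_re] at hlt
        exact hlt.le
    have hhnorm : ‖h‖ ≤ u / R := by
      refine h.opNorm_le_bound (by positivity) fun b => ?_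
      rcases eq_or_ne b 0 with rfl | hb0
      · simp
      · have hbn : (0:ℝ) < ‖b‖ := norm_pos_iff.mpr hb0
        set s : ℝ := R / ‖b‖ with hs
        have hs0 : 0 < s := by positivity
        have hsC : ‖((s : ℝ) : ℂ)‖ = s := by
          simp [Complex.norm_real, abs_of_pos hs0]
        have hb' : ‖((s : ℝ) : ℂ) • b‖ ≤ R := by
          rw [norm_smul, hsC, hs, div_mul_cancel₀ _ hbn.ne']
        have hkey := hball _ hb'
        rw [map_smul, norm_smul, hsC] at hkey
        rw [hs, div_mul_eq_mul_div, div_le_iff₀ hbn] at hkey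
        rw [div_mul_eq_mul_div, le_div_iff₀ hR0]
        linarith [hkey]
    have hfinal : Λ y < u := by
      rw [hΛyval]
      calc (μ h).re ≤ ‖μ h‖ := Complex.re_le_norm (μ h)
        _ ≤ ‖μ‖ * ‖h‖ := μ.le_opNorm h
        _ ≤ ‖μ‖ * (u / R) := mul_le_mul_of_nonneg_left hhnorm (norm_nonneg μ)
        _ < R * (u / R) := by
            have : ‖μ‖ < R := by rw [hRdef]; linarith
            exact mul_lt_mul_of_pos_right this (by positivity)
        _ = u := by field_simp
    linarith
  obtain ⟨z, hzB, hdist⟩ := Metric.mem_closure_iff.mp hyB ε hε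
  obtain ⟨b, hbball, rfl⟩ := hzB
  refine ⟨b, by simpa [dist_zero_right] using hbball, fun g hg => ?_⟩
  have hle := dist_le_pi_dist y (T b) ⟨g, hg⟩
  have h2 : dist (y ⟨g, hg⟩) (T b ⟨g, hg⟩) < ε := lt_of_le_of_lt hle hdist
  rw [dist_eq_norm] at h2
  simpa [hy, hT, LinearMap.pi_apply, norm_sub_rev] using h2

end Helly

section Key
variable {A : Type*} [NonUnitalNormedRing A] [NormedSpace ℂ A]
    [IsScalarTower ℂ A A] [SMulCommClass ℂ A A]

/-- Key lemma: any topologically left invariant φ-mean on LUC agrees with a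
topologically right invariant φ-mean `n` on every element of LUC. -/
lemma left_eq_right (φ : A →L[ℂ] ℂ)
    (hLW : ∀ f ∈ LUCsub A, WAPp f)
    (n : (A →L[ℂ] ℂ) →L[ℂ] ℂ) (hn1 : n φ = 1)
    (hninv : ∀ f ∈ LUCsub A, ∀ a : A, n (adot a f) = φ a * n f)
    (m₁ : (A →L[ℂ] ℂ) →L[ℂ] ℂ) (hm₁ : m₁ φ = 1)
    (hm₁inv : ∀ f ∈ LUCsub A, ∀ a : A, m₁ (fdot f a) = φ a * m₁ f)
    (f : A →L[ℂ] ℂ) (hf : f ∈ LUCsub A) : m₁ f = n f := by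
  classical
  haveI : ContinuousSMul ℂ (WeakSpace ℂ (A →L[ℂ] ℂ)) :=
    WeakBilin.instContinuousSMul ((topDualPairing ℂ (A →L[ℂ] ℂ)).flip)
  set C : ℝ := ‖m₁‖ + 1 with hC
  have hC0 : 0 < C := by positivity
  -- the index type for approximation
  let ι := Finset A × {δ : ℝ // 0 < δ}
  haveI : Nonempty ι := ⟨⟨∅, ⟨1, one_pos⟩⟩⟩
  -- the approximating sets
  set V : ι → Set (WeakSpace ℂ (A →L[ℂ] ℂ)) := fun p =>
    {h | ∃ b : A, ‖b‖ ≤ C ∧ h = adot b f ∧ ‖φ b - 1‖ ≤ (p.2 : ℝ) ∧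
      ∀ a ∈ p.1, ‖(fdot f a) b - m₁ (fdot f a)‖ ≤ (p.2 : ℝ)} with hV
  have hVne : ∀ p : ι, (V p).Nonempty := by
    rintro ⟨s, δ, hδ⟩
    obtain ⟨b, hb, hbt⟩ := helly_approx m₁ (insert φ (s.image (fdot f))) (lt_min hδ one_pos)
    refine ⟨adot b f, b, ?_, rfl, ?_, ?_⟩
    · calc ‖b‖ ≤ ‖m₁‖ + min δ 1 := hb
        _ ≤ C := by rw [hC]; have := min_le_right δ 1; linarith
    · have := hbt φ (Finset.mem_insert_self _ _)
      rw [hm₁] at this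
      exact le_of_lt (lt_of_lt_of_le this (min_le_left _ _))
    · intro a ha
      have := hbt (fdot f a) (Finset.mem_insert_of_mem (Finset.mem_image_of_mem _ ha))
      exact le_of_lt (lt_of_lt_of_le this (min_le_left _ _))
  -- directedness
  have hVdir : ∀ p q : ι, ∃ r : ι, V r ⊆ V p ∧ V r ⊆ V q := by
    rintro ⟨s, δ, hδ⟩ ⟨s', δ', hδ'⟩
    refine ⟨⟨s ∪ s', ⟨min δ δ', lt_min hδ hδ'⟩⟩, ?_, ?_⟩
    · rintro h ⟨b, hb, rfl, h1, h2⟩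
      exact ⟨b, hb, rfl, h1.trans (min_le_left _ _),
        fun a ha => (h2 a (Finset.mem_union_left _ ha)).trans (min_le_left _ _)⟩
    · rintro h ⟨b, hb, rfl, h1, h2⟩
      exact ⟨b, hb, rfl, h1.trans (min_le_right _ _),
        fun a ha => (h2 a (Finset.mem_union_right _ ha)).trans (min_le_right _ _)⟩
  -- the compact set containing all the V p
  set K : Set (WeakSpace ℂ (A →L[ℂ] ℂ)) :=
    closure {g : WeakSpace ℂ (A →L[ℂ] ℂ) | ∃ a : A, ‖a‖ ≤ 1 ∧ g = adot a f} with hK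
  have hKcomp : IsCompact K := hLW f hf
  set K' : Set (WeakSpace ℂ (A →L[ℂ] ℂ)) :=
    (fun h : WeakSpace ℂ (A →L[ℂ] ℂ) => ((C : ℂ)) • h) '' K with hK'
  have hK'comp : IsCompact K' := hKcomp.image (continuous_const_smul _)
  have hCne : ((C : ℝ) : ℂ) ≠ 0 := by exact_mod_cast hC0.ne'
  have hVK : ∀ p : ι, V p ⊆ K' := by
    rintro p h ⟨b, hbC, rfl, -, -⟩
    refine ⟨adot (((C : ℂ))⁻¹ • b) f, subset_closure ⟨((C : ℂ))⁻¹ • b, ?_, rfl⟩, ?_⟩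
    · rw [norm_smul, norm_inv]
      have h1 : ‖((C : ℝ) : ℂ)‖ = C := by
        simp [Complex.norm_real, abs_of_pos hC0]
      rw [h1]
      rw [inv_mul_le_one₀ hC0]
      exact hbC
    · show ((C : ℂ)) • adot (((C : ℂ))⁻¹ • b) f = adot b f
      rw [adot_smul, smul_inv_smul₀ hCne]
  -- the filter
  set F : Filter (WeakSpace ℂ (A →L[ℂ] ℂ)) := ⨅ p : ι, 𝓟 (V p) with hF
  haveI hFne : F.NeBot := by
    refine Filter.iInf_neBot_of_directed ?_ ?_
    · intro p q
      obtain ⟨r, hr1, hr2⟩ := hVdir p q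
      exact ⟨r, Filter.principal_mono.2 hr1, Filter.principal_mono.2 hr2⟩
    · intro p
      exact Filter.principal_neBot_iff.2 (hVne p)
  have hFK : F ≤ 𝓟 K' := le_trans (iInf_le _ Classical.ofNonempty)
    (Filter.principal_mono.2 (hVK _))
  obtain ⟨g, hgK, hg⟩ := hK'comp.exists_clusterPt hFK  -- check name
  have hgcl : ∀ p : ι, g ∈ closure (V p) := by
    intro p
    have : ClusterPt g (𝓟 (V p)) := hg.mono (iInf_le _ p)
    exact mem_closure_iff_clusterPt.2 this
  -- the limit functional as an element of the dual
  set G : A →L[ℂ] ℂ := g with hG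
  -- Step 1: G a = m₁ (fdot f a) for all a
  have step1 : ∀ a : A, G a = m₁ (fdot f a) := by
    intro a
    have hbound : ∀ δ : ℝ, 0 < δ → ‖G a - m₁ (fdot f a)‖ ≤ δ := by
      intro δ hδ
      set ev : (A →L[ℂ] ℂ) →L[ℂ] ℂ := ContinuousLinearMap.apply ℂ ℂ a with hev
      have hDclosed : IsClosed {h : WeakSpace ℂ (A →L[ℂ] ℂ) | ‖ev h - m₁ (fdot f a)‖ ≤ δ} := by
        refine isClosed_le ?_ continuous_const
        exact (((weak_eval_cont ev).sub continuous_const).norm)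
      have hsub : V ⟨{a}, ⟨δ, hδ⟩⟩ ⊆ {h : WeakSpace ℂ (A →L[ℂ] ℂ) | ‖ev h - m₁ (fdot f a)‖ ≤ δ} := by
        rintro h ⟨b, -, rfl, -, h2⟩
        have := h2 a (Finset.mem_singleton_self a)
        show ‖(adot b f) a - m₁ (fdot f a)‖ ≤ δ
        rw [adot_apply]
        rw [fdot_apply] at this
        exact this
      have hgD := hDclosed.closure_subset ((closure_mono hsub) (hgcl ⟨{a}, ⟨δ, hδ⟩⟩))
      exact hgD
    have : ‖G a - m₁ (fdot f a)‖ ≤ 0 := le_of_forall_pos_le_add (by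
      intro ε hε
      simpa using hbound ε hε)
    exact sub_eq_zero.mp (norm_le_zero_iff.mp this)
  -- Step 2: n G = n f
  have step2 : n G = n f := by
    have hbound : ∀ δ : ℝ, 0 < δ → ‖n G - n f‖ ≤ δ * ‖n f‖ := by
      intro δ hδ
      have hDclosed : IsClosed {h : WeakSpace ℂ (A →L[ℂ] ℂ) | ‖n h - n f‖ ≤ δ * ‖n f‖} := by
        refine isClosed_le ?_ continuous_const
        exact (((weak_eval_cont n).sub continuous_const).norm)
      have hsub : V ⟨∅, ⟨δ, hδ⟩⟩ ⊆ {h : WeakSpace ℂ (A →L[ℂ] ℂ) | ‖n h - n f‖ ≤ δ * ‖n f‖} := by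
        rintro h ⟨b, -, rfl, h1, -⟩
        show ‖n (adot b f) - n f‖ ≤ δ * ‖n f‖
        rw [hninv f hf b]
        calc ‖φ b * n f - n f‖ = ‖(φ b - 1) * n f‖ := by ring_nf
          _ = ‖φ b - 1‖ * ‖n f‖ := by rw [norm_mul]
          _ ≤ δ * ‖n f‖ := mul_le_mul_of_nonneg_right h1 (norm_nonneg _)
      exact hDclosed.closure_subset ((closure_mono hsub) (hgcl ⟨∅, ⟨δ, hδ⟩⟩))
    have hzero : ‖n G - n f‖ ≤ 0 := by
      refine le_of_forall_pos_le_add ?_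
      intro ε hε
      have hδ : 0 < ε / (‖n f‖ + 1) := by positivity
      have := hbound _ hδ
      have h2 : ε / (‖n f‖ + 1) * ‖n f‖ ≤ ε := by
        rw [div_mul_eq_mul_div, div_le_iff₀ (by positivity)]
        nlinarith [norm_nonneg (n f), hε.le]
      linarith
    exact sub_eq_zero.mp (norm_le_zero_iff.mp hzero)
  -- Step 3: G = (m₁ f) • φ
  have step3 : G = (m₁ f) • φ := by
    ext a
    rw [step1 a, hm₁inv f hf a]
    simp [smul_eq_mul, mul_comm]
  -- conclude
  rw [step3, map_smul, smul_eq_mul, hn1, mul_one] at step2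
  exact step2

end Key

/-- If LUC(A*) ⊆ WAP(A*), A has a topologically left invariant φ-mean on WAP(A*)
and a topologically right invariant φ-mean on LUC(A*)*, then the topologically
left invariant φ-mean on LUC(A*)* is unique (means on these subspaces are
represented, via Hahn–Banach, by elements of A** invariant on the subspace). -/
theorem stmt19 {A : Type*} [NonUnitalNormedRing A] [NormedSpace ℂ A]
    [IsScalarTower ℂ A A] [SMulCommClass ℂ A A] [CompleteSpace A]
    (φ : A →L[ℂ] ℂ) (hφmul : ∀ a b : A, φ (a * b) = φ a * φ b) (hφ0 : φ ≠ 0)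
    (hLW : ∀ f ∈ LUCsub A, WAPp f)
    -- a topologically left invariant φ-mean on WAP(A*)
    (m : (A →L[ℂ] ℂ) →L[ℂ] ℂ) (hm1 : m φ = 1)
    (hminv : ∀ f : A →L[ℂ] ℂ, WAPp f → ∀ a : A, m (fdot f a) = φ a * m f)
    -- a topologically right invariant φ-mean on LUC(A*)*
    (n : (A →L[ℂ] ℂ) →L[ℂ] ℂ) (hn1 : n φ = 1)
    (hninv : ∀ f ∈ LUCsub A, ∀ a : A, n (adot a f) = φ a * n f) :
    -- uniqueness of topologically left invariant φ-means on LUC(A*)*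
    ∀ m₁ m₂ : (A →L[ℂ] ℂ) →L[ℂ] ℂ,
      (m₁ φ = 1 ∧ ∀ f ∈ LUCsub A, ∀ a : A, m₁ (fdot f a) = φ a * m₁ f) →
      (m₂ φ = 1 ∧ ∀ f ∈ LUCsub A, ∀ a : A, m₂ (fdot f a) = φ a * m₂ f) →
      ∀ f ∈ LUCsub A, m₁ f = m₂ f := by
  rintro m₁ m₂ ⟨h11, h12⟩ ⟨h21, h22⟩ f hf
  rw [left_eq_right φ hLW n hn1 hninv m₁ h11 h12 f hf,
    ← left_eq_right φ hLW n hn1 hninv m₂ h21 h22 f hf]
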